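/- arXiv:2004.05606 — 9 statements merged into one kernel-verified Lean document; each statement's English description precedes it below -/
import Mathlib

section
/- Every Lindelöf, Hausdorff, linearly H-closed space is H-closed. -/
/-- A space is *linearly H-closed* if every cover by open sets that is linearly
ordered by inclusion (a chain cover) has a member that is dense in the space. -/
def LinearlyHClosed (X : Type*) [TopologicalSpace X] : Prop :=
  ∀ C : Set (Set X), (∀ U ∈ C, IsOpen U) → ⋃₀ C = Set.univ → IsChain (· ⊆ ·) C →
    ∃ U ∈ C, Dense U

/-- A space is *H-closed* if every open cover has a finite subfamily whose union
is dense in the space. -/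
def HClosed (X : Type*) [TopologicalSpace X] : Prop :=
  ∀ C : Set (Set X), (∀ U ∈ C, IsOpen U) → ⋃₀ C = Set.univ →
    ∃ F : Finset (Set X), ↑F ⊆ C ∧ Dense (⋃₀ (F : Set (Set X)))

theorem lindelof_linearlyHClosed_hClosed {X : Type*} [TopologicalSpace X] [T2Space X]
    [LindelofSpace X] (hX : LinearlyHClosed X) : HClosed X := by
  intro C hC hcov
  -- countable subcover
  obtain ⟨D, hDC, hDcount, hDcov⟩ :
      ∃ D ⊆ C, D.Countable ∧ ⋃₀ D = Set.univ := by
    rcases isLindelof_univ.elim_countable_subcover (fun U : C ↦ (U : Set X))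
        (fun U ↦ hC U U.2) (by rw [← Set.sUnion_eq_iUnion, hcov]) with ⟨r, hr, hcov'⟩
    refine ⟨(fun U : C ↦ (U : Set X)) '' r, ?_, hr.image _, ?_⟩
    · rintro _ ⟨U, -, rfl⟩; exact U.2
    · apply Set.eq_univ_of_univ_subset
      simpa [Set.sUnion_image] using hcov'
  rcases D.eq_empty_or_nonempty with rfl | hne
  · have hXe : IsEmpty X := Set.univ_eq_empty_iff.mp (by simpa using hDcov.symm)
    exact ⟨∅, by simp, by simp [Set.eq_empty_of_isEmpty]⟩
  · obtain ⟨f, rfl⟩ := Set.Countable.exists_eq_range hDcount hne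
    set V : ℕ → Set X := fun n ↦ ⋃ i ≤ n, f i with hV
    have hVmono : Monotone V := fun m n hmn ↦
      Set.biUnion_subset_biUnion_left fun i hi ↦ le_trans hi hmn
    have hchain : IsChain (· ⊆ ·) (Set.range V) := by
      rintro _ ⟨m, rfl⟩ _ ⟨n, rfl⟩ -
      rcases le_total m n with h | h
      · exact Or.inl (hVmono h)
      · exact Or.inr (hVmono h)
    have hVopen : ∀ U ∈ Set.range V, IsOpen U := by
      rintro _ ⟨n, rfl⟩
      exact isOpen_biUnion fun i _ ↦ hC _ (hDC ⟨i, rfl⟩)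
    have hVcov : ⋃₀ Set.range V = Set.univ := by
      apply Set.eq_univ_of_univ_subset
      rw [← hDcov, Set.sUnion_range, Set.sUnion_range]
      intro x hx
      rcases Set.mem_iUnion.1 hx with ⟨n, hn⟩
      exact Set.mem_iUnion.2 ⟨n, Set.mem_iUnion.2 ⟨n, Set.mem_iUnion.2 ⟨le_refl n, hn⟩⟩⟩
    obtain ⟨_, ⟨n, rfl⟩, hdense⟩ := hX _ hVopen hVcov hchain
    classical
    refine ⟨(Finset.range (n + 1)).image f, ?_, ?_⟩
    · intro U hU
      simp only [Finset.coe_image, Set.mem_image] at hU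
      rcases hU with ⟨i, -, rfl⟩
      exact hDC ⟨i, rfl⟩
    · convert hdense using 1
      ext x
      simp only [Finset.coe_image, Finset.coe_range, Set.mem_sUnion, Set.mem_image,
        Set.mem_Iio, hV, Set.mem_iUnion, Nat.lt_succ_iff]
      constructor
      · rintro ⟨_, ⟨i, hi, rfl⟩, hx⟩; exact ⟨i, hi, hx⟩
      · rintro ⟨i, hi, hx⟩; exact ⟨f i, ⟨i, hi, rfl⟩, hx⟩
end

section
/- Every regular Hausdorff, Lindelöf, linearly H-closed space is compact. -/
theorem regular_lindelof_linearlyHClosed_compact {X : Type*} [TopologicalSpace X]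
    [T2Space X] [RegularSpace X] [LindelofSpace X] (hX : LinearlyHClosed X) :
    CompactSpace X := by
  rcases isEmpty_or_nonempty X with h | h
  · exact Finite.compactSpace
  classical
  constructor
  apply isCompact_of_finite_subcover
  intro ι U hU hcov
  -- Shrink the cover using regularity
  have hshrink : ∀ x : X, ∃ (i : ι) (W : Set X), IsOpen W ∧ x ∈ W ∧ closure W ⊆ U i := by
    intro x
    obtain ⟨i, hi⟩ := Set.mem_iUnion.mp (hcov (Set.mem_univ x))
    obtain ⟨s, hs, hsc, hsU⟩ := exists_mem_nhds_isClosed_subset ((hU i).mem_nhds hi)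
    refine ⟨i, interior s, isOpen_interior, mem_interior_iff_mem_nhds.mpr hs, ?_⟩
    calc closure (interior s) ⊆ closure s := closure_mono interior_subset
    _ = s := hsc.closure_eq
    _ ⊆ U i := hsU
  choose idx W hWo hWx hWc using hshrink
  -- Lindelöf: countable subcover by the W's
  obtain ⟨r, hrc, hrcov⟩ := isLindelof_univ.elim_countable_subcover W hWo
    (fun x _ => Set.mem_iUnion.mpr ⟨x, hWx x⟩)
  have hrne : r.Nonempty := by
    by_contra hne
    rw [Set.not_nonempty_iff_eq_empty] at hne
    simpa [hne] using hrcov (Set.mem_univ h.some)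
  obtain ⟨f, hf⟩ := hrc.exists_eq_range hrne
  -- The chain of finite unions
  set V : ℕ → Set X := fun n => ⋃ k ≤ n, W (f k) with hV
  have hVmono : Monotone V := fun m n hmn =>
    Set.iUnion₂_subset fun k hk => Set.subset_iUnion₂_of_subset k (hk.trans hmn) subset_rfl
  have hchain : IsChain (· ⊆ ·) (Set.range V) := by
    rintro _ ⟨m, rfl⟩ _ ⟨n, rfl⟩ _
    rcases le_total m n with hmn | hmn
    · exact Or.inl (hVmono hmn)
    · exact Or.inr (hVmono hmn)
  have hcov' : ⋃₀ Set.range V = Set.univ := by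
    apply Set.eq_univ_of_univ_subset
    intro x _
    have := hrcov (Set.mem_univ x)
    rw [hf, Set.biUnion_range] at this
    obtain ⟨k, hk⟩ := Set.mem_iUnion.mp this
    exact ⟨V k, ⟨k, rfl⟩, Set.mem_iUnion₂.mpr ⟨k, le_refl k, hk⟩⟩
  obtain ⟨_, ⟨n, rfl⟩, hdense⟩ := hX (Set.range V)
    (by rintro _ ⟨n, rfl⟩; exact isOpen_iUnion fun k => isOpen_iUnion fun _ => hWo _)
    hcov' hchain
  -- Finite subcover from density
  refine ⟨(Finset.range (n + 1)).image (fun k => idx (f k)), fun x _ => ?_⟩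
  have hx : x ∈ closure (V n) := hdense x
  rw [hV, closure_iUnion₂_le_nat] at hx
  obtain ⟨k, hkmem⟩ := Set.mem_iUnion.mp hx
  simp only [Set.mem_iUnion] at hkmem
  obtain ⟨hkn, hxk⟩ := hkmem
  refine Set.mem_iUnion₂.mpr ⟨idx (f k), ?_, hWc (f k) hxk⟩
  exact Finset.mem_image.mpr ⟨k, Finset.mem_range.mpr (Nat.lt_succ_of_le hkn), rfl⟩
end

section
/- Let X be a regular Hausdorff linearly H-closed space and let U ⊆ X be open. Then the closure of U is either compact or not Lindelöf (in its subspace topology). -/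
theorem closure_open_compact_or_not_lindelof {X : Type*} [TopologicalSpace X]
    [T2Space X] [RegularSpace X] (hX : LinearlyHClosed X) (U : Set X) (hU : IsOpen U) :
    IsCompact (closure U) ∨ ¬ LindelofSpace ↥(closure U) := by
  rw [or_iff_not_imp_right, not_not]
  intro hLin
  set K := closure U with hKdef
  have hKlin : IsLindelof K := isLindelof_iff_LindelofSpace.mpr hLin
  apply isCompact_of_finite_subcover
  intro ι O hO hcov
  -- choose for each x ∈ K an index i x and an open nbhd N x with closure N x ⊆ O (i x)
  have hreg : ∀ x : K, ∃ (i : ι) (N : Set X), IsOpen N ∧ (x : X) ∈ N ∧ closure N ⊆ O i := by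
    intro x
    obtain ⟨i, hi⟩ := Set.mem_iUnion.mp (hcov x.2)
    obtain ⟨V, hVnhds, hVclosed, hVsub⟩ :=
      exists_mem_nhds_isClosed_subset ((hO i).mem_nhds hi)
    refine ⟨i, interior V, isOpen_interior, mem_interior_iff_mem_nhds.mpr hVnhds, ?_⟩
    exact (closure_minimal interior_subset hVclosed).trans hVsub
  choose idx N hNopen hNmem hNsub using hreg
  have hKcov : K ⊆ ⋃ x : K, N x := fun x hx => Set.mem_iUnion.mpr ⟨⟨x, hx⟩, hNmem ⟨x, hx⟩⟩
  obtain ⟨t, htc, htcov⟩ := hKlin.elim_countable_subcover N hNopen hKcov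
  rcases t.eq_empty_or_nonempty with rfl | htne
  · refine ⟨∅, ?_⟩
    have : K ⊆ ∅ := by simpa using htcov
    simpa using this
  obtain ⟨f, hf⟩ := htc.exists_eq_range htne
  -- the chain
  set W : ℕ → Set X := fun n => (⋃ k ∈ Finset.range (n + 1), N (f k)) ∪ Kᶜ with hW
  have hWopen : ∀ n, IsOpen (W n) := fun n =>
    ((isOpen_biUnion fun k _ => hNopen (f k)).union isClosed_closure.isOpen_compl)
  have hWmono : Monotone W := by
    intro a b hab
    refine Set.union_subset_union_left _ ?_
    refine Set.biUnion_subset_biUnion_left ?_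
    intro k hk
    exact Finset.mem_range.mpr (lt_of_lt_of_le (Finset.mem_range.mp hk) (by omega))
  have hWcov : ⋃₀ Set.range W = Set.univ := by
    apply Set.eq_univ_of_forall
    intro x
    by_cases hx : x ∈ K
    · obtain ⟨y, hyt, hyN⟩ := Set.mem_iUnion₂.mp (htcov hx)
      have : y ∈ Set.range f := by rw [← hf]; exact hyt
      obtain ⟨k, rfl⟩ := this
      exact ⟨W k, ⟨k, rfl⟩, Or.inl (Set.mem_biUnion (Finset.self_mem_range_succ k) hyN)⟩
    · exact ⟨W 0, ⟨0, rfl⟩, Or.inr hx⟩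
  have hWchain : IsChain (· ⊆ ·) (Set.range W) := by
    rintro _ ⟨a, rfl⟩ _ ⟨b, rfl⟩ _
    rcases le_total a b with h | h
    · exact Or.inl (hWmono h)
    · exact Or.inr (hWmono h)
  obtain ⟨_, ⟨n, rfl⟩, hdense⟩ := hX (Set.range W) (by rintro _ ⟨n, rfl⟩; exact hWopen n)
    hWcov hWchain
  -- U is contained in the closure of the finite union of N's
  have hUsub : U ⊆ closure (⋃ k ∈ Finset.range (n + 1), N (f k)) := by
    intro x hxU
    by_contra hx
    set G := U ∩ (closure (⋃ k ∈ Finset.range (n + 1), N (f k)))ᶜ with hG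
    have hGopen : IsOpen G := hU.inter isClosed_closure.isOpen_compl
    obtain ⟨y, hyG, hyW⟩ := hdense.inter_open_nonempty G hGopen ⟨x, hxU, hx⟩
    rcases hyW with hyN | hyK
    · exact hyG.2 (subset_closure hyN)
    · exact hyK (subset_closure hyG.1)
  have hKsub : K ⊆ ⋃ k ∈ Finset.range (n + 1), closure (N (f k)) := by
    have h1 : K ⊆ closure (⋃ k ∈ Finset.range (n + 1), N (f k)) :=
      closure_minimal hUsub isClosed_closure
    refine h1.trans ?_
    rw [Finset.closure_biUnion]
  classical
  refine ⟨(Finset.range (n + 1)).image fun k => idx (f k), ?_⟩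
  intro x hx
  obtain ⟨k, hk, hxk⟩ := Set.mem_iUnion₂.mp (hKsub hx)
  exact Set.mem_iUnion₂.mpr ⟨idx (f k), Finset.mem_image.mpr ⟨k, hk, rfl⟩, hNsub (f k) hxk⟩
end

section
/- Let X be a Hausdorff space that is locally compact, countably tight, linearly H-closed and not compact. Then X contains an open set U that is σ-compact (a countable union of compact sets) and whose closure, with the subspace topology, is linearly H-closed and not Lindelöf. -/
/-- A space is *countably tight* if for every subset `E` and every point `x` in the
closure of `E` there is a countable subset `A ⊆ E` with `x` in the closure of `A`. -/
def CountablyTight (X : Type*) [TopologicalSpace X] : Prop :=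
  ∀ (E : Set X) (x : X), x ∈ closure E →
    ∃ A ⊆ E, A.Countable ∧ x ∈ closure A

/-!
If some open σ-compact set has non-Lindelöf closure, it is the required `U`, since the closure
of a nonempty open subset of a linearly H-closed space is linearly H-closed. Otherwise every
open σ-compact set has Lindelöf closure; as `X` is not Lindelöf (a Lindelöf, locally compact,
linearly H-closed space is compact), that closure misses a point, and the closure together with
the point lies in a larger open σ-compact set. Iterating transfinitely gives open sets `u α`,
`α < ω₁`, with `closure (u β) ⊆ u α` for `β < α` and `u (α + 1) ⊄ closure (u α)`. By countable
tightness their union `Y` is clopen, so the sets `u α ∪ Yᶜ` form a chain cover of `X`; a dense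
member gives `Y ⊆ closure (u α)`, contradicting the growth at `α + 1`.
-/

open Set Topology
open scoped Ordinal

lemma Ordinal.countable_Iio_of_lt_omega_one {α : Ordinal} (hα : α < ω₁) : (Iio α).Countable := by
  rw [← Cardinal.le_aleph0_iff_set_countable, Cardinal.mk_Iio_ordinal, Cardinal.lift_le_aleph0,
    ← Cardinal.lt_aleph_one_iff]
  exact Cardinal.lt_omega_iff_card_lt.1 hα

section

variable {X : Type*} [TopologicalSpace X]

lemma IsLindelof.exists_isSigmaCompact_superset [WeaklyLocallyCompactSpace X] {L : Set X}
    (hL : IsLindelof L) : ∃ S, IsSigmaCompact S ∧ L ⊆ S := by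
  choose K hK hKx using fun x : X => exists_compact_mem_nhds x
  obtain ⟨t, htc, -, hLt⟩ := hL.elim_nhds_subcover K fun x _ => hKx x
  exact ⟨⋃ x ∈ t, K x, isSigmaCompact_biUnion htc fun x _ => (hK x).isSigmaCompact, hLt⟩

lemma IsSigmaCompact.exists_isOpen_isSigmaCompact_superset [WeaklyLocallyCompactSpace X]
    {S : Set X} (hS : IsSigmaCompact S) : ∃ U, IsOpen U ∧ IsSigmaCompact U ∧ S ⊆ U := by
  obtain ⟨K, hK, rfl⟩ := hS
  choose thicken hthicken hsub using fun L : {L : Set X // IsCompact L} =>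
    exists_compact_superset L.2
  let L : ℕ → {L : Set X // IsCompact L} := fun n =>
    Nat.rec ⟨K 0, hK 0⟩ (fun n Ln => ⟨thicken Ln ∪ K (n + 1), (hthicken Ln).union (hK _)⟩) n
  have hL_succ (n : ℕ) : (L n).1 ⊆ interior (L (n + 1)).1 :=
    (hsub _).trans (interior_mono subset_union_left)
  have hK_sub : ∀ n, K n ⊆ (L n).1
    | 0 => subset_rfl
    | _ + 1 => subset_union_right
  have hU : ⋃ n, interior (L (n + 1)).1 = ⋃ n, (L n).1 :=
    subset_antisymm
      (iUnion_subset fun n => interior_subset.trans (subset_iUnion (fun n => (L n).1) (n + 1)))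
      (iUnion_mono hL_succ)
  exact ⟨⋃ n, (L n).1, hU ▸ isOpen_iUnion fun _ => isOpen_interior,
    isSigmaCompact_iUnion_of_isCompact _ fun n => (L n).2, iUnion_mono hK_sub⟩

lemma exists_isOpen_isSigmaCompact_not_subset_closure [WeaklyLocallyCompactSpace X]
    (hX : ¬ LindelofSpace X) {S : Set X} (hS : IsLindelof (closure S)) :
    ∃ T, (IsOpen T ∧ IsSigmaCompact T) ∧ closure S ⊆ T ∧ ¬ T ⊆ closure S := by
  obtain ⟨x, hx⟩ : ∃ x, x ∉ closure S := by
    by_contra! h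
    exact hX ⟨eq_univ_of_forall h ▸ hS⟩
  obtain ⟨K, hK, hxK⟩ := (hS.insert x).exists_isSigmaCompact_superset
  obtain ⟨T, hTo, hTs, hKT⟩ := hK.exists_isOpen_isSigmaCompact_superset
  exact ⟨T, ⟨hTo, hTs⟩, (subset_insert _ _).trans (hxK.trans hKT),
    fun h => hx (h (hKT (hxK (mem_insert x _))))⟩

lemma LinearlyHClosed.exists_dense_of_monotone {ι : Type*} [LinearOrder ι]
    (hX : LinearlyHClosed X) {g : ι → Set X} (hgo : ∀ i, IsOpen (g i)) (hg : Monotone g)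
    (hcov : ⋃ i, g i = univ) : ∃ i, Dense (g i) := by
  obtain ⟨_, ⟨i, rfl⟩, hi⟩ :=
    hX (range g) (forall_mem_range.2 hgo) (sUnion_range g ▸ hcov) hg.isChain_range
  exact ⟨i, hi⟩

lemma LinearlyHClosed.compactSpace [T2Space X] [WeaklyLocallyCompactSpace X] [LindelofSpace X]
    (hX : LinearlyHClosed X) : CompactSpace X := by
  obtain ⟨S, hS, hSuniv⟩ := isLindelof_univ.exists_isSigmaCompact_superset (X := X)
  have : SigmaCompactSpace X := isSigmaCompact_univ_iff.1 (univ_subset_iff.1 hSuniv ▸ hS)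
  let K := CompactExhaustion.choice X
  obtain ⟨n, hn⟩ := hX.exists_dense_of_monotone (fun n => isOpen_interior)
    (fun m n h => interior_mono (K.subset h))
    (univ_subset_iff.1 fun x _ => mem_iUnion.2 ((K.exists_mem_nhds x).imp
      fun _ => mem_interior_iff_mem_nhds.2))
  exact ⟨hn.closure_eq ▸ (K.isCompact n).closure_of_subset interior_subset⟩

lemma IsOpen.linearlyHClosed_closure (hX : LinearlyHClosed X) {U : Set X} (hU : IsOpen U)
    (hne : U.Nonempty) : LinearlyHClosed (closure U) := by
  intro c hc hcov hchain
  -- `w V` is an open set of `X` containing `(closure U)ᶜ` with trace `V` on `closure U`;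
  -- `w` is monotone, so it turns `c` into a chain cover of `X`
  let w : Set (closure U) → Set X := fun V => interior ((closure U)ᶜ ∪ Subtype.val '' V)
  have hw_trace (V : Set (closure U)) : Subtype.val ⁻¹' w V ⊆ V := fun z hz => by
    simpa [z.2] using interior_subset hz
  have hmem (z : closure U) : ∃ V ∈ c, z ∈ V := by
    rw [← mem_sUnion, hcov]; trivial
  obtain ⟨V₀, hV₀, -⟩ := hmem ⟨_, subset_closure hne.some_mem⟩
  have hw_cov : ⋃₀ (w '' c) = univ := by
    refine eq_univ_of_forall fun x => ?_
    by_cases hx : x ∈ closure U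
    · obtain ⟨V, hV, hxV⟩ := hmem ⟨x, hx⟩
      obtain ⟨W, hWo, rfl⟩ := isOpen_induced_iff.1 (hc V hV)
      exact ⟨_, mem_image_of_mem w hV, interior_maximal
        (fun y hy => or_iff_not_imp_left.2 fun hyZ => ⟨⟨y, not_not.1 hyZ⟩, hy, rfl⟩) hWo hxV⟩
    · exact ⟨_, mem_image_of_mem w hV₀,
        interior_maximal subset_union_left isClosed_closure.isOpen_compl hx⟩
  obtain ⟨_, ⟨V, hV, rfl⟩, hdense⟩ := hX (w '' c) (forall_mem_image.2 fun _ _ => isOpen_interior)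
    hw_cov (hchain.image_of_map_rel _ _ w fun _ _ h => interior_mono (union_subset_union_right _
      (image_mono h)))
  refine ⟨V, hV, ?_⟩
  have hU_sub : U ⊆ closure (Subtype.val '' V) := fun u hu =>
    closure_mono (t := Subtype.val '' V)
      (fun y hy => ⟨⟨y, subset_closure hy.1⟩, hw_trace V hy.2, rfl⟩)
      (hdense.open_subset_closure_inter hU hu)
  rw [dense_iff_closure_eq, eq_univ_iff_forall]
  exact fun z => closure_subtype.2 (closure_minimal hU_sub isClosed_closure z.2)

theorem exists_omega_one_chain (P : Set X → Prop)
    (hP : ∀ 𝒮 : Set (Set X), 𝒮.Countable → (∀ S ∈ 𝒮, P S) → P (⋃₀ 𝒮))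
    (hnext : ∀ S, P S → ∃ T, P T ∧ closure S ⊆ T ∧ ¬ T ⊆ closure S) :
    ∃ u : Ordinal.{0} → Set X, (∀ α < ω₁, P (u α)) ∧
      (∀ β α, β < α → α < ω₁ → closure (u β) ⊆ u α) ∧
      ∀ α < ω₁, ¬ u (Order.succ α) ⊆ closure (u α) := by
  choose! next hP_next hsub_next hnsub_next using hnext
  -- adding `S` makes the iteration monotone and changes nothing on sets satisfying `P`
  set u : Ordinal.{0} → Set X := fun α => transfiniteIterate (fun S => S ∪ next S) α ∅
  have hmono : Monotone u := monotone_transfiniteIterate _ _ fun _ => subset_union_left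
  have hnext_eq {S : Set X} (hS : P S) : S ∪ next S = next S :=
    union_eq_right.2 (subset_closure.trans (hsub_next S hS))
  have hu_succ_eq (α : Ordinal) : u (Order.succ α) = u α ∪ next (u α) :=
    transfiniteIterate_succ _ _ _ (not_isMax α)
  have hP_u : ∀ α < ω₁, P (u α) := by
    intro α
    induction α using SuccOrder.limitRecOn with
    | isMin α hα =>
      intro _
      rw [hα.eq_bot, show u ⊥ = ∅ from transfiniteIterate_bot _ _]
      exact sUnion_empty (α := X) ▸ hP ∅ countable_empty (by simp)
    | succ α hα ih =>
      intro hα'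
      have hPα := ih ((Order.lt_succ α).trans hα')
      rw [hu_succ_eq, hnext_eq hPα]
      exact hP_next _ hPα
    | isSuccLimit α hα ih =>
      intro hα'
      simp only [u, transfiniteIterate_limit _ _ _ hα, iSup_eq_iUnion, ← sUnion_range]
      have := (Ordinal.countable_Iio_of_lt_omega_one hα').to_subtype
      exact hP _ (countable_range _) (forall_mem_range.2 fun β => ih β.1 β.2 (β.2.trans hα'))
  have hu_succ (α : Ordinal) (hα : α < ω₁) : u (Order.succ α) = next (u α) := by
    rw [hu_succ_eq, hnext_eq (hP_u α hα)]
  refine ⟨u, hP_u, fun β α hβ hα => ?_, fun α hα => hu_succ α hα ▸ hnsub_next _ (hP_u α hα)⟩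
  calc closure (u β) ⊆ next (u β) := hsub_next _ (hP_u β (hβ.trans hα))
    _ = u (Order.succ β) := (hu_succ β (hβ.trans hα)).symm
    _ ⊆ u α := hmono (Order.succ_le_of_lt hβ)

lemma LinearlyHClosed.exists_lt_omega_one_forall_subset_closure (hX : LinearlyHClosed X)
    (hct : CountablyTight X) {u : Ordinal.{0} → Set X} (hu : ∀ α < ω₁, IsOpen (u α))
    (hu_closure : ∀ β α, β < α → α < ω₁ → closure (u β) ⊆ u α) :
    ∃ α < ω₁, ∀ β < ω₁, u β ⊆ closure (u α) := by
  have hmono (β α : Ordinal) (h : β ≤ α) (hα : α < ω₁) : u β ⊆ u α :=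
    h.eq_or_lt.elim (fun h => h ▸ subset_rfl) fun h => subset_closure.trans (hu_closure β α h hα)
  set Y := ⋃ α < ω₁, u α
  have hY_open : IsOpen Y := isOpen_biUnion hu
  -- a countable subset of `Y` lies in a single `u γ`, as countable suprema stay below `ω₁`
  have hY_closed : IsClosed Y := by
    refine closure_subset_iff_isClosed.1 fun x hx => ?_
    obtain ⟨A, hAY, hA, hxA⟩ := hct Y x hx
    have := hA.to_subtype
    choose β hβ hAβ using fun a : A => mem_iUnion₂.1 (hAY a.2)
    have hγ : ⨆ a, β a < ω₁ := Ordinal.iSup_lt_omega_one hβ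
    have hγ' := (Cardinal.isSuccLimit_omega 1).succ_lt hγ
    have hAγ : A ⊆ u (⨆ a, β a) := fun a ha =>
      hmono _ _ (Ordinal.le_iSup β ⟨a, ha⟩) hγ (hAβ ⟨a, ha⟩)
    exact mem_iUnion₂.2 ⟨_, hγ', hu_closure _ _ (Order.lt_succ _) hγ' (closure_mono hAγ hxA)⟩
  obtain ⟨⟨α, hα⟩, hdense⟩ := hX.exists_dense_of_monotone (g := fun α : Iio ω₁ => u α ∪ Yᶜ)
    (fun α => (hu α α.2).union hY_closed.isOpen_compl)
    (fun α β h => union_subset_union_left _ (hmono α β h β.2))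
    (eq_univ_of_forall fun x => by
      by_cases hx : x ∈ Y
      · obtain ⟨α, hα, hxα⟩ := mem_iUnion₂.1 hx
        exact mem_iUnion.2 ⟨⟨α, hα⟩, Or.inl hxα⟩
      · exact mem_iUnion.2 ⟨⟨0, Ordinal.omega_pos 1⟩, Or.inr hx⟩)
  have hclosure : closure (u α) ∪ Yᶜ = univ := by
    rw [← hY_open.isClosed_compl.closure_eq, ← closure_union]
    exact hdense.closure_eq
  refine ⟨α, hα, fun β hβ y hy => ?_⟩
  have hyY : y ∈ Y := mem_iUnion₂.2 ⟨β, hβ, hy⟩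
  exact (hclosure.symm ▸ mem_univ y : y ∈ closure (u α) ∪ Yᶜ).resolve_right (not_not.2 hyY)

end

theorem loc_compact_countably_tight_lhc_noncompact {X : Type*} [TopologicalSpace X]
    [T2Space X] [WeaklyLocallyCompactSpace X]
    (hct : CountablyTight X) (hX : LinearlyHClosed X) (hnc : ¬ CompactSpace X) :
    ∃ U : Set X, IsOpen U ∧ IsSigmaCompact U ∧
      LinearlyHClosed ↥(closure U) ∧ ¬ LindelofSpace ↥(closure U) := by
  by_cases h : ∃ U : Set X, IsOpen U ∧ IsSigmaCompact U ∧ ¬ IsLindelof (closure U)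
  · obtain ⟨U, hUo, hUs, hUL⟩ := h
    have hne : U.Nonempty := nonempty_iff_ne_empty.2 fun hU => hUL (by simp [hU, isLindelof_empty])
    exact ⟨U, hUo, hUs, hUo.linearlyHClosed_closure hX hne,
      fun h => hUL (isLindelof_iff_lindelofSpace.2 h)⟩
  push Not at h
  have hXL : ¬ LindelofSpace X := fun _ => hnc hX.compactSpace
  obtain ⟨u, hP_u, hu_closure, hu_succ⟩ :=
    exists_omega_one_chain (fun S => IsOpen S ∧ IsSigmaCompact S)
      (fun 𝒮 h𝒮 hP => ⟨isOpen_sUnion fun S hS => (hP S hS).1,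
        isSigmaCompact_sUnion 𝒮 h𝒮 fun S => (hP S S.2).2⟩)
      fun S hS => exists_isOpen_isSigmaCompact_not_subset_closure hXL (h S hS.1 hS.2)
  obtain ⟨α, hα, hsub⟩ := hX.exists_lt_omega_one_forall_subset_closure hct
    (fun α hα => (hP_u α hα).1) hu_closure
  exact (hu_succ α hα (hsub _ ((Cardinal.isSuccLimit_omega 1).succ_lt hα))).elim
end

section
/- Let Y be a Hausdorff topological space and let p : Y → ω₁ be a continuous, closed, surjective map onto the space of countable ordinals with its order topology, such that the preimage of every point is compact. Then Y contains an uncountable subset that is discrete in its subspace topology. -/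
open Set

/-- `ω₁` : the space of countable ordinals (ordinals below the first uncountable
ordinal), with the topology inherited from the order topology on `Ordinal`
(which coincides with its order topology). -/
abbrev OmegaOne : Type _ := ↥(Set.Iio (Cardinal.aleph 1).ord)

/-!
Every successor ordinal is an isolated point of `ω₁`, and `o ↦ o + 1` shows there are uncountably
many of them. Picking one point of `Y` over each isolated point gives an uncountable set on which
`p` is a continuous injection into a discrete space, so the set is itself discrete.
-/

open Function Order

section
variable {X Y : Type*} [TopologicalSpace X] [TopologicalSpace Y]

theorem discreteTopology_setOf_isOpen_singleton : DiscreteTopology {x : X | IsOpen {x}} :=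
  discreteTopology_subtype_iff'.2 fun x hx => ⟨{x}, hx, by simpa using hx⟩

theorem DiscreteTopology.image_of_rightInverse {p : Y → X} {g : X → Y} (hp : Continuous p)
    (hg : RightInverse g p) (S : Set X) [DiscreteTopology S] : DiscreteTopology (g '' S) := by
  have hmaps : MapsTo p (g '' S) S := by
    rintro _ ⟨x, hx, rfl⟩
    rwa [hg x]
  have hinj : InjOn p (g '' S) :=
    (hg.comp_eq_id ▸ injective_id : Injective (p ∘ g)).injOn_range.mono (image_subset_range g S)
  exact .of_continuous_injective (hp.restrict hmaps) (hmaps.restrict_inj.2 hinj)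

theorem exists_not_countable_discreteTopology_of_surjective {p : Y → X} (hp : Continuous p)
    (hsurj : Surjective p) (hX : ¬ {x : X | IsOpen {x}}.Countable) :
    ∃ D : Set Y, ¬ D.Countable ∧ DiscreteTopology D := by
  obtain ⟨g, hg⟩ := hsurj.hasRightInverse
  have := discreteTopology_setOf_isOpen_singleton (X := X)
  refine ⟨g '' {x | IsOpen {x}}, fun hD => hX ?_, .image_of_rightInverse hp hg _⟩
  exact (mapsTo_image g _).countable_of_injOn hg.injective.injOn hD

end

namespace OmegaOne

instance : NoMaxOrder OmegaOne :=
  (Cardinal.isSuccLimit_ord (Cardinal.aleph0_le_aleph 1)).isSuccPrelimit.noMaxOrder_Iio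

instance : Uncountable OmegaOne := by
  rw [← not_countable_iff, ← Cardinal.mk_le_aleph0_iff, Cardinal.mk_Iio_ordinal,
    Cardinal.card_ord, Cardinal.lift_le_aleph0, not_le]
  exact Cardinal.aleph0_lt_aleph_one

theorem not_countable_setOf_isOpen_singleton : ¬ {o : OmegaOne | IsOpen {o}}.Countable := by
  have hsucc : MapsTo succ univ {o : OmegaOne | IsOpen {o}} := fun a _ =>
    SuccOrder.isOpen_singleton_of_not_isSuccPrelimit (not_isSuccPrelimit_succ a)
  exact fun h => not_countable_univ (hsucc.countable_of_injOn succ_injective.injOn h)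

end OmegaOne

theorem perfect_preimage_omegaOne_has_uncountable_discrete_general
    {Y : Type*} [TopologicalSpace Y]
    (p : Y → OmegaOne) (hcont : Continuous p)
    (hsurj : Function.Surjective p) :
    ∃ D : Set Y, ¬ D.Countable ∧ DiscreteTopology ↥D :=
  exists_not_countable_discreteTopology_of_surjective hcont hsurj
    OmegaOne.not_countable_setOf_isOpen_singleton

theorem perfect_preimage_omegaOne_has_uncountable_discrete
    {Y : Type*} [TopologicalSpace Y] [T2Space Y]
    (p : Y → OmegaOne) (hcont : Continuous p) (hclosed : IsClosedMap p)
    (hsurj : Function.Surjective p) (hfib : ∀ o : OmegaOne, IsCompact (p ⁻¹' {o})) :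
    ∃ D : Set Y, ¬ D.Countable ∧ DiscreteTopology ↥D :=
  perfect_preimage_omegaOne_has_uncountable_discrete_general p hcont hsurj
end

section
/- Every normal Hausdorff linearly H-closed space is countably compact. -/
def CountablyCompact (X : Type*) [TopologicalSpace X] : Prop :=
  ∀ C : Set (Set X), C.Countable → (∀ U ∈ C, IsOpen U) → ⋃₀ C = Set.univ →
    ∃ F : Finset (Set X), ↑F ⊆ C ∧ ⋃₀ (F : Set (Set X)) = Set.univ

open Set Filter Topology

theorem finite_inter_range_of_forall_notMem {X : Type*} {V : ℕ → Set X} (hV : Monotone V)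
    {x : ℕ → X} (hx : ∀ n, x n ∉ V n) (n : ℕ) : (V n ∩ range x).Finite := by
  refine ((finite_Iio n).image x).subset ?_
  rintro _ ⟨hm, m, rfl⟩
  exact ⟨m, lt_of_not_ge fun hnm => hx m (hV hnm hm), rfl⟩

section

variable {X : Type*} [TopologicalSpace X]

theorem isClosed_and_isDiscrete_of_finite_inter [T1Space X] {S : Set X}
    (h : ∀ y, ∃ U ∈ 𝓝 y, (U ∩ S).Finite) : IsClosed S ∧ IsDiscrete S := by
  refine isClosed_and_discrete_iff.2 fun y => ?_
  obtain ⟨U, hU, hfin⟩ := h y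
  rw [disjoint_principal_right, mem_nhdsWithin_iff_eventually]
  filter_upwards [hU, (hfin.sdiff (t := {y})).isClosed.compl_mem_nhds fun hy => hy.2 rfl]
    with z hzU hz hzy hzS
  exact hz ⟨⟨hzU, hzS⟩, hzy⟩

theorem IsClosed.exists_continuousMap_eqOn_of_isDiscrete [NormalSpace X] {S : Set X}
    (hS : IsClosed S) (hd : IsDiscrete S) (f : X → ℝ) : ∃ g : C(X, ℝ), EqOn g f S := by
  have := hd.to_subtype
  obtain ⟨g, hg⟩ := ContinuousMap.exists_restrict_eq hS
    ⟨fun y : S => f y, continuous_of_discreteTopology⟩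
  exact ⟨g, fun y hy => DFunLike.congr_fun hg ⟨y, hy⟩⟩

theorem exists_continuousMap_lt_of_forall_notMem [T1Space X] [NormalSpace X]
    {V : ℕ → Set X} (hVo : ∀ n, IsOpen (V n)) (hV : Monotone V) (hcov : ⋃ n, V n = univ)
    {x : ℕ → X} (hx : ∀ n, x n ∉ V n) : ∃ g : C(X, ℝ), ∀ n : ℕ, (n : ℝ) < g (x n) := by
  classical
  have hmem : ∀ y, ∃ n, y ∈ V n := iUnion_eq_univ_iff.1 hcov
  let index (y : X) : ℕ := Nat.find (hmem y)
  have hD : IsClosed (range x) ∧ IsDiscrete (range x) :=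
    isClosed_and_isDiscrete_of_finite_inter fun y =>
      ⟨V (index y), (hVo _).mem_nhds (Nat.find_spec (hmem y)),
        finite_inter_range_of_forall_notMem hV hx _⟩
  obtain ⟨g, hg⟩ := hD.1.exists_continuousMap_eqOn_of_isDiscrete hD.2 fun y => (index y : ℝ)
  refine ⟨g, fun n => ?_⟩
  rw [hg (mem_range_self n), Nat.cast_lt]
  exact lt_of_not_ge fun h => hx n (hV h (Nat.find_spec (hmem (x n))))

theorem countablyCompact_of_forall_monotone_exists_eq_univ
    (h : ∀ V : ℕ → Set X, (∀ n, IsOpen (V n)) → Monotone V → ⋃ n, V n = univ →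
      ∃ n, V n = univ) :
    CountablyCompact X := by
  classical
  intro C hC hCo hCu
  rcases C.eq_empty_or_nonempty with rfl | hne
  · exact ⟨∅, by simp, by simpa using hCu⟩
  obtain ⟨f, rfl⟩ := hC.exists_eq_range hne
  obtain ⟨n, hn⟩ := h (accumulate f)
    (fun n => isOpen_biUnion fun m _ => hCo _ (mem_range_self m)) monotone_accumulate
    (by rwa [iUnion_accumulate, ← sUnion_range])
  refine ⟨(Finset.Iic n).image f, by simp, ?_⟩
  rw [← hn, accumulate_def]
  simp

namespace LinearlyHClosed

theorem exists_dense_of_monotone_s9 (hX : LinearlyHClosed X) {V : ℕ → Set X}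
    (hVo : ∀ n, IsOpen (V n)) (hV : Monotone V) (hcov : ⋃ n, V n = univ) :
    ∃ n, Dense (V n) := by
  obtain ⟨_, ⟨n, rfl⟩, hn⟩ :=
    hX (range V) (forall_mem_range.2 hVo) (by rwa [sUnion_range]) hV.isChain_range
  exact ⟨n, hn⟩

theorem exists_abs_le (hX : LinearlyHClosed X) (g : C(X, ℝ)) : ∃ n : ℕ, ∀ y, |g y| ≤ n := by
  have hc : Continuous fun y => |g y| := by fun_prop
  obtain ⟨n, hn⟩ := hX.exists_dense_of_monotone_s9 (V := fun n : ℕ => {y | |g y| < n})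
    (fun n => isOpen_lt hc continuous_const)
    (fun a b hab y (hy : |g y| < a) => hy.trans_le (by exact_mod_cast hab))
    (iUnion_eq_univ_iff.2 fun y => exists_nat_gt |g y|)
  exact ⟨n, fun y => closure_lt_subset_le hc continuous_const (hn.closure_eq ▸ mem_univ y)⟩

theorem exists_eq_univ_of_monotone [T1Space X] [NormalSpace X] (hX : LinearlyHClosed X)
    {V : ℕ → Set X} (hVo : ∀ n, IsOpen (V n)) (hV : Monotone V) (hcov : ⋃ n, V n = univ) :
    ∃ n, V n = univ := by
  by_contra! h
  choose x hx using fun n => (ne_univ_iff_exists_notMem (V n)).1 (h n)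
  obtain ⟨g, hg⟩ := exists_continuousMap_lt_of_forall_notMem hVo hV hcov hx
  obtain ⟨n, hn⟩ := hX.exists_abs_le g
  exact (hg n).not_ge ((le_abs_self _).trans (hn (x n)))

end LinearlyHClosed

end

theorem normal_linearlyHClosed_countablyCompact {X : Type*} [TopologicalSpace X]
    [T2Space X] [NormalSpace X] (hX : LinearlyHClosed X) : CountablyCompact X :=
  countablyCompact_of_forall_monotone_exists_eq_univ fun _ hVo hV hcov =>
    hX.exists_eq_univ_of_monotone hVo hV hcov
end

section
/- Let X be a Hausdorff topological space. Then the following are equivalent: (1) every locally finite family of non-empty open subsets of X is finite; (2) every countable open cover of X has a finite subfamily whose union is dense in X. -/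
/-!
If the finite unions of a countable open cover are never dense, the complements of their closures
form a sequence of nonempty open sets which is locally finite, because each point lies in some
member of the cover and that member misses all later complements. A locally finite sequence of
nonempty sets takes infinitely many values, contradicting (1). Conversely, an infinite
locally finite family of nonempty open sets `U₀, U₁, …` yields the increasing open cover by the
complements of the closures of its tails `⋃ k ≥ n, Uₖ`; no finite part of it is dense, since its
`n`-th member misses `Uₙ`.
-/

/-- A space is *feebly compact* if every countable open cover has a finite
subfamily whose union is dense. -/
def FeeblyCompact (X : Type*) [TopologicalSpace X] : Prop :=
  ∀ C : Set (Set X), C.Countable → (∀ U ∈ C, IsOpen U) → ⋃₀ C = Set.univ →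
    ∃ F : Finset (Set X), ↑F ⊆ C ∧ Dense (⋃₀ (F : Set (Set X)))

open Set Topology

section

variable {X : Type*} [TopologicalSpace X]

theorem locallyFinite_subtype_val_iff {F : Set (Set X)} :
    LocallyFinite ((↑) : F → Set X) ↔
      ∀ x, ∃ V ∈ 𝓝 x, {U | U ∈ F ∧ (U ∩ V).Nonempty}.Finite := by
  have hval (V : Set X) :
      {U | U ∈ F ∧ (U ∩ V).Nonempty} = Subtype.val '' {U : F | ((U : Set X) ∩ V).Nonempty} := by
    ext U
    simp [and_comm]
  simp only [LocallyFinite, hval, finite_image_iff Subtype.val_injective.injOn]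

theorem LocallyFinite.finite_of_finite_range {ι : Type*} {f : ι → Set X} (hf : LocallyFinite f)
    (hne : ∀ i, (f i).Nonempty) (hrange : (range f).Finite) : Finite ι := by
  have hfibers : ∀ U ∈ range f, (f ⁻¹' {U}).Finite := by
    rintro _ ⟨i, rfl⟩
    obtain ⟨x, hx⟩ := hne i
    exact (hf.point_finite x).subset fun j (hj : f j = f i) => show x ∈ f j from hj ▸ hx
  rw [← finite_univ_iff, ← preimage_range f]
  exact hrange.preimage' hfibers

theorem locallyFinite_compl_closure_of_monotone {f : ℕ → Set X} (hmono : Monotone f)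
    (hopen : ∀ n, IsOpen (f n)) (hcover : ⋃ n, f n = univ) :
    LocallyFinite fun n => (closure (f n))ᶜ := by
  intro x
  obtain ⟨k, hk⟩ := mem_iUnion.1 (hcover ▸ mem_univ x)
  refine ⟨f k, (hopen k).mem_nhds hk, (finite_Iio k).subset ?_⟩
  rintro n ⟨y, hy, hyk⟩
  by_contra! hkn
  exact hy (subset_closure (hmono (not_lt.1 hkn) hyk))

theorem monotone_compl_closure_iUnion_add (f : ℕ → Set X) :
    Monotone fun n => (closure (⋃ k, f (n + k)))ᶜ := by
  intro n m hnm
  refine compl_subset_compl.2 (closure_mono (iUnion_subset fun k => ?_))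
  exact subset_iUnion_of_subset (m - n + k) (by rw [← add_assoc, Nat.add_sub_cancel' hnm])

theorem LocallyFinite.iUnion_compl_closure_iUnion_add {f : ℕ → Set X} (hf : LocallyFinite f) :
    ⋃ n, (closure (⋃ k, f (n + k)))ᶜ = univ := by
  refine eq_univ_of_forall fun x => ?_
  obtain ⟨b, hb⟩ := (hf.closure.point_finite x).bddAbove
  refine mem_iUnion.2 ⟨b + 1, fun hx => ?_⟩
  have htail := (hf.comp_injective (add_right_injective (b + 1))).closure_iUnion
  simp only [Function.comp_apply] at htail
  rw [htail, mem_iUnion] at hx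
  obtain ⟨k, hk⟩ := hx
  have : b + 1 + k ≤ b := hb hk
  omega

theorem feeblyCompact_iff_exists_dense_of_monotone :
    FeeblyCompact X ↔ ∀ f : ℕ → Set X, Monotone f → (∀ n, IsOpen (f n)) →
      ⋃ n, f n = univ → ∃ n, Dense (f n) := by
  classical
  constructor
  · intro hfc f hmono hopen hcover
    obtain ⟨F, hFf, hdense⟩ :=
      hfc (range f) (countable_range f) (forall_mem_range.2 hopen) (sUnion_range f ▸ hcover)
    obtain ⟨s, -, rfl⟩ := Finset.subset_set_image_iff.1 (image_univ (f := f) ▸ hFf)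
    refine ⟨s.sup id, hdense.mono (sUnion_subset ?_)⟩
    simp only [Finset.coe_image, mem_image, Finset.mem_coe]
    rintro _ ⟨k, hk, rfl⟩
    exact hmono (Finset.le_sup (f := id) hk)
  · intro h C hCc hCo hCu
    rcases C.eq_empty_or_nonempty with rfl | hCne
    · have : IsEmpty X := univ_eq_empty_iff.1 (hCu ▸ sUnion_empty)
      exact ⟨∅, by simp, fun x => isEmptyElim x⟩
    obtain ⟨g, rfl⟩ := hCc.exists_eq_range hCne
    obtain ⟨n, hn⟩ := h (accumulate g) monotone_accumulate
      (fun n => isOpen_biUnion fun k _ => hCo _ (mem_range_self k))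
      (by rw [iUnion_accumulate, ← sUnion_range, hCu])
    refine ⟨(Finset.Iic n).image g, by simp, ?_⟩
    simpa [accumulate_def, sUnion_image] using hn

end

theorem locallyFinite_finite_iff_feeblyCompact_general {X : Type*} [TopologicalSpace X] :
    (∀ F : Set (Set X), (∀ U ∈ F, IsOpen U ∧ U.Nonempty) →
        (∀ x : X, ∃ V ∈ nhds x, {U | U ∈ F ∧ (U ∩ V).Nonempty}.Finite) → F.Finite)
      ↔ FeeblyCompact X := by
  rw [feeblyCompact_iff_exists_dense_of_monotone]
  constructor
  · intro hfin f hmono hopen hcover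
    by_contra! hnd
    have hne (n : ℕ) : (closure (f n))ᶜ.Nonempty :=
      nonempty_compl.2 fun h => hnd n (dense_iff_closure_eq.2 h)
    have hlf := locallyFinite_compl_closure_of_monotone hmono hopen hcover
    have hrange := hfin _ (forall_mem_range.2 fun n => ⟨isClosed_closure.isOpen_compl, hne n⟩)
      (locallyFinite_subtype_val_iff.1 hlf.on_range)
    exact Infinite.not_finite (hlf.finite_of_finite_range hne hrange)
  · intro hfc F hF hlf
    rw [← not_infinite]
    intro hinf
    set e := hinf.natEmbedding F
    set U : ℕ → Set X := fun n => e n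
    have hU : LocallyFinite U := (locallyFinite_subtype_val_iff.2 hlf).comp_injective e.injective
    obtain ⟨n, hn⟩ := hfc _ (monotone_compl_closure_iUnion_add U)
      (fun n => isClosed_closure.isOpen_compl) hU.iUnion_compl_closure_iUnion_add
    obtain ⟨y, hyU, hy⟩ := hn.inter_open_nonempty (U n) (hF _ (e n).2).1 (hF _ (e n).2).2
    exact hy (subset_closure (mem_iUnion.2 ⟨0, hyU⟩))

theorem locallyFinite_finite_iff_feeblyCompact {X : Type*} [TopologicalSpace X]
    [T2Space X] :
    (∀ F : Set (Set X), (∀ U ∈ F, IsOpen U ∧ U.Nonempty) →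
        (∀ x : X, ∃ V ∈ nhds x, {U | U ∈ F ∧ (U ∩ V).Nonempty}.Finite) → F.Finite)
      ↔ FeeblyCompact X :=
  locallyFinite_finite_iff_feeblyCompact_general
end

section
/- Let X be a regular Hausdorff feebly compact space in which every point is a Gδ (an intersection of countably many open sets). Then X is first countable. -/
open Set Filter Topology

namespace FeeblyCompact

variable {X : Type*} [TopologicalSpace X]

theorem exists_dense_of_monotone (hfc : FeeblyCompact X) {U : ℕ → Set X} (hU : Monotone U)
    (hUo : ∀ n, IsOpen (U n)) (hUc : ⋃ n, U n = univ) : ∃ n, Dense (U n) := by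
  classical
  obtain ⟨F, hFU, hF⟩ :=
    hfc (range U) (countable_range U) (forall_mem_range.2 hUo) (by rwa [sUnion_range])
  obtain ⟨s, -, rfl⟩ := Finset.subset_set_image_iff.1 (image_univ (f := U) ▸ hFU)
  obtain ⟨N, hN⟩ := s.exists_le
  refine ⟨N, hF.mono ?_⟩
  rintro y ⟨_, hV, hy⟩
  obtain ⟨n, hn, rfl⟩ := Finset.mem_image.1 hV
  exact hU (hN n hn) hy

theorem nonempty_iInter_closure (hfc : FeeblyCompact X) {W : ℕ → Set X} (hW : Antitone W)
    (hWo : ∀ n, IsOpen (W n)) (hWne : ∀ n, (W n).Nonempty) :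
    (⋂ n, closure (W n)).Nonempty := by
  by_contra h
  obtain ⟨N, hN⟩ := hfc.exists_dense_of_monotone (U := fun n => (closure (W n))ᶜ)
    (fun _ _ hmn => compl_subset_compl.2 (closure_mono (hW hmn)))
    (fun _ => isClosed_closure.isOpen_compl)
    (by rw [← compl_iInter, compl_eq_univ_sdiff, not_nonempty_iff_eq_empty.1 h, sdiff_empty])
  obtain ⟨y, hyW, hyc⟩ := hN.inter_open_nonempty (W N) (hWo N) (hWne N)
  exact hyc (subset_closure hyW)

theorem nhds_hasAntitoneBasis [RegularSpace X] (hfc : FeeblyCompact X) {x : X} {V : ℕ → Set X}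
    (hV : Antitone V) (hVo : ∀ n, IsOpen (V n)) (hxV : ∀ n, x ∈ V n)
    (hVx : ⋂ n, closure (V n) ⊆ {x}) : (𝓝 x).HasAntitoneBasis V := by
  refine ⟨⟨fun U => ⟨fun hU => ?_, fun ⟨n, _, hn⟩ =>
    mem_of_superset ((hVo n).mem_nhds (hxV n)) hn⟩⟩, hV⟩
  obtain ⟨C, hC, hCc, hCU⟩ := exists_mem_nhds_isClosed_subset hU
  suffices ∃ n, V n ⊆ C from this.imp fun _ hn => ⟨trivial, hn.trans hCU⟩
  by_contra! hVC
  obtain ⟨z, hz⟩ := hfc.nonempty_iInter_closure (W := fun n => V n \ C)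
    (fun _ _ hmn => sdiff_subset_sdiff_left (hV hmn)) (fun n => (hVo n).sdiff hCc)
    (fun n => sdiff_nonempty.2 (hVC n))
  have hzx : z = x := hVx (mem_iInter.2 fun n => closure_mono sdiff_subset (mem_iInter.1 hz n))
  have hzC : z ∈ closure Cᶜ := closure_mono (sdiff_subset_compl _ _) (mem_iInter.1 hz 0)
  rw [closure_compl, hzx] at hzC
  exact hzC (mem_interior_iff_mem_nhds.2 hC)

end FeeblyCompact

theorem exists_antitone_isOpen_closure_subset {X : Type*} [TopologicalSpace X] [RegularSpace X]
    {x : X} {f : ℕ → Set X} (hf : ∀ n, f n ∈ 𝓝 x) :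
    ∃ V : ℕ → Set X, Antitone V ∧ (∀ n, IsOpen (V n)) ∧ (∀ n, x ∈ V n) ∧
      ∀ n, closure (V n) ⊆ f n := by
  choose C hC hCc hCf using fun n => exists_mem_nhds_isClosed_subset (hf n)
  refine ⟨fun n => interior (⋂ k ∈ Iic n, C k), fun _ _ hmn => ?_, fun _ => isOpen_interior,
    fun n => ?_, fun n => ?_⟩
  · exact interior_mono (biInter_subset_biInter_left (Iic_subset_Iic.2 hmn))
  · exact mem_interior_iff_mem_nhds.2 ((biInter_mem (finite_Iic n)).2 fun k _ => hC k)
  · exact (closure_minimal (interior_subset.trans (biInter_subset_of_mem self_mem_Iic))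
      (hCc n)).trans (hCf n)

theorem feeblyCompact_gdelta_points_firstCountable_general {X : Type*} [TopologicalSpace X]
    [RegularSpace X] (hfc : FeeblyCompact X)
    (hGδ : ∀ x : X, ∃ f : ℕ → Set X, (∀ n, IsOpen (f n)) ∧ (⋂ n, f n) = {x}) :
    FirstCountableTopology X := by
  refine ⟨fun x => ?_⟩
  obtain ⟨f, hfo, hfx⟩ := hGδ x
  have hxf : ∀ n, x ∈ f n := mem_iInter.1 (hfx ▸ mem_singleton x)
  obtain ⟨V, hV, hVo, hxV, hVf⟩ :=
    exists_antitone_isOpen_closure_subset fun n => (hfo n).mem_nhds (hxf n)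
  exact (hfc.nhds_hasAntitoneBasis hV hVo hxV (hfx ▸ iInter_mono hVf)).isCountablyGenerated

theorem feeblyCompact_gdelta_points_firstCountable {X : Type*} [TopologicalSpace X]
    [T2Space X] [RegularSpace X] (hfc : FeeblyCompact X)
    (hGδ : ∀ x : X, ∃ f : ℕ → Set X, (∀ n, IsOpen (f n)) ∧ (⋂ n, f n) = {x}) :
    FirstCountableTopology X :=
  feeblyCompact_gdelta_points_firstCountable_general hfc hGδ
end

section
/- Let X be a regular Hausdorff space of countable spread. If X is not hereditarily separable, then X contains a subspace that is hereditarily Lindelöf and not separable (an L-space). -/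
/-!
Transfinite recursion of length `ω₁` in a non-separable subspace gives a left-separated
sequence `(f i)_{i < ω₁}`: no `f i` lies in the closure of its predecessors. Its range `L` is
not separable, because every countable subset of `L` lies in an initial segment. If `L` were
not hereditarily Lindelöf, an open family with no countable subfamily of the same union would
similarly give a right-separated sequence `g i = f (h i)` in `L`. Along an uncountable set of
indices on which both `i` and `h i` increase, the sequence is left- and right-separated at
once, hence an uncountable discrete subspace, contradicting countable spread.
-/

open TopologicalSpace

/-- A space has *countable spread* if every subspace that is discrete in its
subspace topology is countable. -/
def CountableSpread (X : Type*) [TopologicalSpace X] : Prop :=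
  ∀ D : Set X, DiscreteTopology ↥D → D.Countable

open Set Function Topology Cardinal Ordinal

universe u

instance Ordinal.uncountable_toType_omega_one : Uncountable (ω₁ : Ordinal.{u}).ToType := by
  rw [← aleph0_lt_mk_iff, mk_toType, card_omega]
  exact aleph0_lt_aleph_one

theorem Ordinal.countable_Iio_toType_omega_one (i : (ω₁ : Ordinal.{u}).ToType) :
    (Iio i).Countable := by
  rw [← le_aleph0_iff_set_countable, ← lt_aleph_one_iff]
  simpa using mk_Iio_lt i

section CountableInitialSegments

variable {ι : Type*}

theorem exists_forall_apply_image_Iio [Preorder ι] [WellFoundedLT ι]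
    (hι : ∀ i : ι, (Iio i).Countable) {Y : Type*} {P : Set Y → Y → Prop}
    (h : ∀ t : Set Y, t.Countable → ∃ y, P t y) :
    ∃ f : ι → Y, ∀ i, P (f '' Iio i) (f i) := by
  have : ∀ t : Set Y, ∃ y, t.Countable → P t y := by
    intro t
    by_cases ht : t.Countable
    · exact (h t ht).imp fun _ hy _ => hy
    · exact ⟨(h ∅ countable_empty).choose, fun ht' => absurd ht' ht⟩
  choose step hstep using this
  let f : ι → Y := WellFoundedLT.fix fun i ih => step (range fun j : Iio i => ih j j.2)
  have hf : ∀ i, f i = step (f '' Iio i) := fun i => by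
    rw [image_eq_range]
    exact WellFoundedLT.fix_eq _ i
  exact ⟨f, fun i => hf i ▸ hstep _ ((hι i).image f)⟩

theorem exists_notMem_of_countable [Uncountable ι] {s : Set ι} (hs : s.Countable) :
    ∃ j, j ∉ s :=
  (ne_univ_iff_exists_notMem s).mp fun h => not_countable_univ (h ▸ hs)

theorem exists_forall_lt_of_countable [LinearOrder ι] [Uncountable ι]
    (hι : ∀ i : ι, (Iio i).Countable) {A : Set ι} (hA : A.Countable) :
    ∃ j, ∀ a ∈ A, a < j := by
  obtain ⟨j, hj⟩ := exists_notMem_of_countable <|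
    hA.biUnion fun a _ => Iio_insert (a := a) ▸ (hι a).insert a
  exact ⟨j, fun a ha => not_le.mp fun hja => hj (mem_biUnion ha hja)⟩

theorem exists_strictMono_comp_strictMono [LinearOrder ι] [WellFoundedLT ι] [Uncountable ι]
    (hι : ∀ i : ι, (Iio i).Countable) {h : ι → ι} (hh : Injective h) :
    ∃ a : ι → ι, StrictMono a ∧ StrictMono (h ∘ a) := by
  obtain ⟨a, ha⟩ := exists_forall_apply_image_Iio hι
    (P := fun t y => ∀ x ∈ t, x < y ∧ h x < h y) fun t ht => by
      obtain ⟨j, hj⟩ := exists_forall_lt_of_countable hι (ht.union (ht.image h))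
      obtain ⟨y, hy⟩ := exists_notMem_of_countable ((hι j).union ((hι j).preimage hh))
      simp only [mem_union, mem_Iio, mem_preimage, not_or, not_lt] at hy
      exact ⟨y, fun x hx => ⟨(hj x (.inl hx)).trans_le hy.1,
        (hj (h x) (.inr (mem_image_of_mem h hx))).trans_le hy.2⟩⟩
  exact ⟨a, fun i i' hi => (ha i' (a i) (mem_image_of_mem a hi)).1,
    fun i i' hi => (ha i' (a i) (mem_image_of_mem a hi)).2⟩

end CountableInitialSegments

section Separated

variable {ι X Y : Type*} [TopologicalSpace X] [TopologicalSpace Y]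

def IsLeftSeparated [Preorder ι] (f : ι → X) : Prop :=
  ∀ i, f i ∉ closure (f '' Iio i)

def IsRightSeparated [Preorder ι] (f : ι → X) : Prop :=
  ∀ i, f i ∉ closure (f '' Ioi i)

theorem IsLeftSeparated.injective [LinearOrder ι] {f : ι → X} (hf : IsLeftSeparated f) :
    Injective f := by
  refine Injective.of_lt_imp_ne fun i j hij hfij => hf j ?_
  exact hfij ▸ subset_closure (mem_image_of_mem f hij)

theorem IsRightSeparated.injective [LinearOrder ι] {f : ι → X} (hf : IsRightSeparated f) :
    Injective f := by
  refine Injective.of_lt_imp_ne fun i j hij hfij => hf i ?_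
  exact hfij ▸ subset_closure (mem_image_of_mem f hij)

theorem IsLeftSeparated.comp_strictMono [Preorder ι] {f : ι → X} (hf : IsLeftSeparated f)
    {a : ι → ι} (ha : StrictMono a) : IsLeftSeparated (f ∘ a) := fun i hi =>
  hf (a i) (closure_mono (image_comp f a _ ▸ image_mono ha.image_Iio_subset) hi)

theorem IsRightSeparated.comp_strictMono [Preorder ι] {f : ι → X} (hf : IsRightSeparated f)
    {a : ι → ι} (ha : StrictMono a) : IsRightSeparated (f ∘ a) := fun i hi =>
  hf (a i) (closure_mono (image_comp f a _ ▸ image_mono ha.image_Ioi_subset) hi)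

theorem IsLeftSeparated.comp_isInducing [Preorder ι] {f : ι → X} (hf : IsLeftSeparated f)
    {φ : X → Y} (hφ : IsInducing φ) : IsLeftSeparated (φ ∘ f) := fun i hi =>
  hf i (by rwa [hφ.closure_eq_preimage_closure_image, mem_preimage, ← image_comp])

theorem IsRightSeparated.comp_isInducing [Preorder ι] {f : ι → X} (hf : IsRightSeparated f)
    {φ : X → Y} (hφ : IsInducing φ) : IsRightSeparated (φ ∘ f) := fun i hi =>
  hf i (by rwa [hφ.closure_eq_preimage_closure_image, mem_preimage, ← image_comp])

theorem discreteTopology_range_of_isLeftSeparated_of_isRightSeparated [LinearOrder ι]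
    {f : ι → X} (hl : IsLeftSeparated f) (hr : IsRightSeparated f) :
    DiscreteTopology (range f) := by
  refine discreteTopology_of_noAccPts ?_
  rintro _ ⟨i, rfl⟩ hacc
  rw [accPt_principal_iff_nhdsWithin, ← mem_closure_iff_nhdsWithin_neBot] at hacc
  have hsplit : range f \ {f i} ⊆ f '' Iio i ∪ f '' Ioi i := by
    rintro _ ⟨⟨j, rfl⟩, hj⟩
    rcases lt_trichotomy j i with hji | rfl | hij
    · exact .inl (mem_image_of_mem f hji)
    · exact absurd rfl hj
    · exact .inr (mem_image_of_mem f hij)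
  rcases (closure_union (s := f '' Iio i) ▸ closure_mono hsplit hacc) with h | h
  exacts [hl i h, hr i h]

theorem exists_isLeftSeparated_of_not_separableSpace [Preorder ι] [WellFoundedLT ι]
    (hι : ∀ i : ι, (Iio i).Countable) (hX : ¬SeparableSpace X) :
    ∃ f : ι → X, IsLeftSeparated f :=
  exists_forall_apply_image_Iio hι (P := fun t y => y ∉ closure t) fun t ht => by
    by_contra! hdense
    exact hX ⟨⟨t, ht, hdense⟩⟩

theorem IsLeftSeparated.not_separableSpace_range [LinearOrder ι] [Uncountable ι]
    (hι : ∀ i : ι, (Iio i).Countable) {f : ι → X} (hf : IsLeftSeparated f) :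
    ¬SeparableSpace (range f) := by
  rintro ⟨d, hdc, hdd⟩
  obtain ⟨j, hj⟩ := exists_forall_lt_of_countable hι
    ((hdc.image Subtype.val).preimage hf.injective)
  refine hf j (closure_mono ?_ (closure_subtype.mp (hdd ⟨f j, mem_range_self j⟩)))
  rintro _ ⟨⟨_, a, rfl⟩, had, rfl⟩
  exact mem_image_of_mem f (hj a ⟨_, had, rfl⟩)

theorem HereditarilyLindelofSpace.of_forall_exists_countable_biUnion_eq {X : Type u}
    [TopologicalSpace X]
    (H : ∀ (κ : Type u) (U : κ → Set X), (∀ k, IsOpen (U k)) →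
      ∃ t : Set κ, t.Countable ∧ ⋃ k ∈ t, U k = ⋃ k, U k) :
    HereditarilyLindelofSpace X :=
  of_forall_isOpen fun s hs => isLindelof_of_countable_subcover fun U hUo hsU => by
    obtain ⟨t, htc, ht⟩ := H _ (fun k => U k ∩ s) fun k => (hUo k).inter hs
    refine ⟨t, htc, fun x hx => ?_⟩
    have hx' : x ∈ ⋃ k ∈ t, U k ∩ s := ht ▸ mem_iUnion.mpr ((mem_iUnion.mp (hsU hx)).imp
      fun _ hk => ⟨hk, hx⟩)
    exact biUnion_mono subset_rfl (fun _ _ => inter_subset_left) hx'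

theorem exists_isRightSeparated_of_not_hereditarilyLindelofSpace {X : Type u}
    [TopologicalSpace X] [Preorder ι] [WellFoundedLT ι] (hι : ∀ i : ι, (Iio i).Countable)
    (hX : ¬HereditarilyLindelofSpace X) : ∃ g : ι → X, IsRightSeparated g := by
  obtain ⟨κ, U, hUo, hU⟩ : ∃ (κ : Type u) (U : κ → Set X), (∀ k, IsOpen (U k)) ∧
      ∀ t : Set κ, t.Countable → ∃ k, ¬U k ⊆ ⋃ j ∈ t, U j := by
    contrapose! hX
    refine .of_forall_exists_countable_biUnion_eq fun κ U hUo => ?_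
    obtain ⟨t, htc, ht⟩ := hX κ U hUo
    exact ⟨t, htc, (iUnion₂_subset_iUnion _ _).antisymm (iUnion_subset ht)⟩
  obtain ⟨k, hk⟩ := exists_forall_apply_image_Iio hι hU
  choose g hgU hg using fun i => not_subset.mp (hk i)
  refine ⟨g, fun i hi => ?_⟩
  have hdisj : Disjoint (U (k i)) (g '' Ioi i) := disjoint_right.mpr
    fun _ ⟨j, hij, hgj⟩ => hgj ▸ fun hmem => hg j (mem_biUnion (mem_image_of_mem k hij) hmem)
  exact disjoint_left.mp (hdisj.closure_right (hUo _)) (hgU i) hi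

theorem not_countableSpread_of_isLeftSeparated_of_isRightSeparated [LinearOrder ι]
    [WellFoundedLT ι] [Uncountable ι] (hι : ∀ i : ι, (Iio i).Countable) {f g : ι → X}
    (hf : IsLeftSeparated f) (hg : IsRightSeparated g) (hgf : range g ⊆ range f) :
    ¬CountableSpread X := by
  choose h hh using fun i => hgf (mem_range_self i)
  have hfh : f ∘ h = g := funext hh
  obtain ⟨a, ha, hha⟩ := exists_strictMono_comp_strictMono hι
    (Injective.of_comp (f := f) (hfh ▸ hg.injective))
  have hl : IsLeftSeparated (f ∘ (h ∘ a)) := hf.comp_strictMono hha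
  have hr : IsRightSeparated (f ∘ (h ∘ a)) := by
    rw [← comp_assoc, hfh]
    exact hg.comp_strictMono ha
  intro hX
  have hcount := hX _ (discreteTopology_range_of_isLeftSeparated_of_isRightSeparated hl hr)
  exact not_countable_univ (preimage_range (f ∘ (h ∘ a)) ▸ hcount.preimage hl.injective)

end Separated

theorem countable_spread_not_hereditarily_separable_gives_Lspace_general
    {X : Type*} [TopologicalSpace X]
    (hs : CountableSpread X)
    (hns : ¬ ∀ S : Set X, SeparableSpace ↥S) :
    ∃ S : Set X, HereditarilyLindelofSpace ↥S ∧ ¬ SeparableSpace ↥S := by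
  have hι := Ordinal.countable_Iio_toType_omega_one.{0}
  obtain ⟨S, hS⟩ := not_forall.mp hns
  obtain ⟨f, hf⟩ := exists_isLeftSeparated_of_not_separableSpace hι hS
  have hL : IsLeftSeparated (Subtype.val ∘ f) := hf.comp_isInducing .subtypeVal
  refine ⟨range (Subtype.val ∘ f), by_contra fun hHL => ?_, hL.not_separableSpace_range hι⟩
  obtain ⟨g, hg⟩ := exists_isRightSeparated_of_not_hereditarilyLindelofSpace hι hHL
  refine not_countableSpread_of_isLeftSeparated_of_isRightSeparated hι hL
    (hg.comp_isInducing .subtypeVal) ?_ hs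
  exact (range_comp_subset_range g Subtype.val).trans Subtype.range_coe.subset

theorem countable_spread_not_hereditarily_separable_gives_Lspace
    {X : Type*} [TopologicalSpace X] [T2Space X] [RegularSpace X]
    (hs : CountableSpread X)
    (hns : ¬ ∀ S : Set X, SeparableSpace ↥S) :
    ∃ S : Set X, HereditarilyLindelofSpace ↥S ∧ ¬ SeparableSpace ↥S :=
  countable_spread_not_hereditarily_separable_gives_Lspace_general hs hns
end
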